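/- arXiv:2009.01648 — 8 statements merged into one kernel-verified Lean document; each statement's English description precedes it below -/
import Mathlib

section
/- Let α, γ be real numbers with γ ≠ 0 and suppose Δ := α² + 4γ = 0, and set θ := α/2 (so θ ≠ 0). Let (x_j)_{j≥1} be a real sequence with x_j ≠ 0 for all j ≥ 1 satisfying x_{j+1} = α + γ/x_j for all j ≥ 1, and suppose x_1 ≠ θ. Set β := -1 + θ/(x_1 - θ). Then for every j ≥ 1 one has β + j ≠ 0 and x_j = θ·(1 + 1/(β + j)). -/
/-- Theorem 2.1, Type 1 case (Δ = 0): explicit solution of the recurrence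
`x_{j+1} = α + γ / x_j`. -/
theorem type1_solution (α γ : ℝ) (hγ : γ ≠ 0) (hΔ : α ^ 2 + 4 * γ = 0)
    (θ : ℝ) (hθ : θ = α / 2)
    (x : ℕ → ℝ) (hx : ∀ j ≥ 1, x j ≠ 0)
    (hrec : ∀ j ≥ 1, x (j + 1) = α + γ / x j)
    (hx1 : x 1 ≠ θ)
    (β : ℝ) (hβ : β = -1 + θ / (x 1 - θ)) :
    ∀ j : ℕ, 1 ≤ j → β + (j : ℝ) ≠ 0 ∧ x j = θ * (1 + 1 / (β + (j : ℝ))) := by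
  have hθ0 : θ ≠ 0 := by
    intro h
    apply hγ
    have hα0 : α = 0 := by rw [hθ] at h; linarith
    nlinarith [hΔ]
  have hγθ : γ = -θ ^ 2 := by rw [hθ]; nlinarith
  have hα : α = 2 * θ := by rw [hθ]; ring
  intro j hj
  induction j with
  | zero => omega
  | succ n ih =>
    rcases Nat.lt_or_ge n 1 with h1 | h1
    · have hn : n = 0 := by omega
      subst hn
      have hx1θ : x 1 - θ ≠ 0 := sub_ne_zero.mpr hx1
      have hb1 : β + 1 = θ / (x 1 - θ) := by rw [hβ]; ring
      constructor
      · push_cast; rw [hb1]; exact div_ne_zero hθ0 hx1θ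
      · push_cast; rw [hb1]; field_simp; ring
    · obtain ⟨hne, hxn⟩ := ih h1
      have hxne : x n ≠ 0 := hx n h1
      have hne1 : β + (n : ℝ) + 1 ≠ 0 := by
        intro h
        apply hxne
        rw [hxn]
        have h2 : β + (n : ℝ) = -1 := by linarith
        rw [h2]; norm_num
      constructor
      · push_cast; intro h; exact hne1 (by linarith)
      · push_cast
        rw [hrec n h1, hxn, hγθ, hα]
        rw [hxn] at hxne
        have hne1' : (1 : ℝ) + β + (n : ℝ) ≠ 0 := fun h => hne1 (by linarith)
        field_simp
        rw [← add_assoc, mul_add (β + (n : ℝ) + 1), mul_one_div_cancel hne1]; ring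
end

section
/- Let α, γ be real numbers with α > 0 and Δ := α² + 4γ < 0. Set ρ := √(−γ), φ := arctan(√(−α² − 4γ)/α), and let (x_j)_{j≥1} be a real sequence with x_j ≠ 0 for all j ≥ 1 satisfying x_{j+1} = α + γ/x_j for all j ≥ 1. Set ω := −φ + arctan(cot(φ) − (x_1/ρ)·csc(φ)). Then for every j ≥ 1, cos(jφ + ω) ≠ 0 and x_j = ρ·(cos(φ) − sin(φ)·tan(jφ + ω)). -/
/-- Theorem 2.1, Type 3 case (Δ < 0, α > 0): explicit solution of the recurrence
`x_{j+1} = α + γ / x_j`. -/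
theorem type3_solution_pos (α γ : ℝ) (hα : α > 0) (hΔ : α ^ 2 + 4 * γ < 0)
    (ρ φ : ℝ) (hρ : ρ = Real.sqrt (-γ))
    (hφ : φ = Real.arctan (Real.sqrt (-α ^ 2 - 4 * γ) / α))
    (x : ℕ → ℝ) (hx : ∀ j ≥ 1, x j ≠ 0)
    (hrec : ∀ j ≥ 1, x (j + 1) = α + γ / x j)
    (ω : ℝ) (hω : ω = -φ + Real.arctan (Real.cot φ - (x 1 / ρ) * (Real.sin φ)⁻¹)) :
    ∀ j : ℕ, 1 ≤ j → Real.cos ((j : ℝ) * φ + ω) ≠ 0 ∧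
      x j = ρ * (Real.cos φ - Real.sin φ * Real.tan ((j : ℝ) * φ + ω)) := by
  have hγ : γ < 0 := by nlinarith [sq_nonneg α]
  have hρpos : 0 < ρ := by rw [hρ]; exact Real.sqrt_pos.mpr (by linarith)
  have hρne : ρ ≠ 0 := ne_of_gt hρpos
  have hρsq : ρ ^ 2 = -γ := by rw [hρ, Real.sq_sqrt (by linarith)]
  have hγeq : γ = -ρ ^ 2 := by linarith
  set s : ℝ := Real.sqrt (-α ^ 2 - 4 * γ) with hsdef
  have hspos : 0 < s := Real.sqrt_pos.mpr (by linarith)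
  have hssq : s ^ 2 = -α ^ 2 - 4 * γ := Real.sq_sqrt (by linarith)
  have hcos : Real.cos φ = α / (2 * ρ) := by
    rw [hφ, Real.cos_arctan]
    have h1 : 1 + (s / α) ^ 2 = (2 * ρ / α) ^ 2 := by
      field_simp
      nlinarith
    rw [h1, Real.sqrt_sq (by positivity), one_div_div]
  have hcosne : Real.cos φ ≠ 0 := by rw [hcos]; positivity
  have halpha : α = 2 * ρ * Real.cos φ := by rw [hcos]; field_simp
  have hsin : Real.sin φ = s / (2 * ρ) := by
    have ht : Real.tan φ = s / α := by rw [hφ, Real.tan_arctan]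
    have h2 : Real.sin φ = Real.tan φ * Real.cos φ := by
      rw [Real.tan_eq_sin_div_cos]; field_simp
    rw [h2, ht, hcos]
    field_simp
  have hsinpos : 0 < Real.sin φ := by rw [hsin]; positivity
  have hsinne : Real.sin φ ≠ 0 := ne_of_gt hsinpos
  intro j hj
  induction j, hj using Nat.le_induction with
  | base =>
    set c : ℝ := Real.cot φ - (x 1 / ρ) * (Real.sin φ)⁻¹ with hc
    have hone : ((1 : ℕ) : ℝ) * φ + ω = Real.arctan c := by
      rw [hω]; push_cast; ring
    have hcpos : 0 < Real.cos (Real.arctan c) := Real.cos_arctan_pos c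
    constructor
    · rw [hone]; exact ne_of_gt hcpos
    · rw [hone, Real.tan_arctan, hc, Real.cot_eq_cos_div_sin]
      field_simp
      ring
  | succ j hj ih =>
    obtain ⟨hcne, hxj⟩ := ih
    obtain ⟨θ, hθ⟩ : ∃ θ : ℝ, θ = (j : ℝ) * φ + ω := ⟨_, rfl⟩
    rw [← hθ] at hcne hxj
    have hxjne := hx j hj
    have hmul : x j * Real.cos θ = ρ * Real.cos (θ + φ) := by
      rw [Real.cos_add, hxj, Real.tan_eq_sin_div_cos]
      field_simp
    have hcne' : Real.cos (θ + φ) ≠ 0 := by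
      intro h
      rw [h, mul_zero] at hmul
      rcases mul_eq_zero.mp hmul with h1 | h1
      · exact hxjne h1
      · exact hcne h1
    have hcθ : Real.cos φ * Real.cos (θ + φ) + Real.sin φ * Real.sin (θ + φ)
        = Real.cos θ := by
      have := Real.cos_sub (θ + φ) φ
      rw [add_sub_cancel_right] at this
      linarith [this]
    have h2' : x (j + 1) * x j = α * x j + γ := by
      rw [hrec j hj]; field_simp
    have key2 : x (j + 1) * Real.cos (θ + φ)
        = ρ * (Real.cos φ * Real.cos (θ + φ) - Real.sin φ * Real.sin (θ + φ)) := by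
      apply mul_left_cancel₀ hρne
      linear_combination Real.cos θ * h2' + (α - x (j + 1)) * hmul
        + ρ * Real.cos (θ + φ) * halpha + Real.cos θ * hγeq + ρ ^ 2 * hcθ
    have hθ' : ((j + 1 : ℕ) : ℝ) * φ + ω = θ + φ := by
      rw [hθ]; push_cast; ring
    rw [hθ']
    refine ⟨hcne', ?_⟩
    rw [Real.tan_eq_sin_div_cos]
    field_simp
    linear_combination key2
end

section
/- Let α, γ be real numbers with α < 0 and Δ := α² + 4γ < 0. Set ρ := √(−γ), φ := arctan(√(−α² − 4γ)/α) + π, and let (x_j)_{j≥1} be a real sequence with x_j ≠ 0 for all j ≥ 1 satisfying x_{j+1} = α + γ/x_j for all j ≥ 1. Set ω := −φ + arctan(cot(φ) − (x_1/ρ)·csc(φ)). Then for every j ≥ 1, cos(jφ + ω) ≠ 0 and x_j = ρ·(cos(φ) − sin(φ)·tan(jφ + ω)). -/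
/-- Theorem 2.1, Type 3 case (Δ < 0, α < 0): explicit solution of the recurrence
`x_{j+1} = α + γ / x_j`. -/
theorem type3_solution_neg (α γ : ℝ) (hα : α < 0) (hΔ : α ^ 2 + 4 * γ < 0)
    (ρ φ : ℝ) (hρ : ρ = Real.sqrt (-γ))
    (hφ : φ = Real.arctan (Real.sqrt (-α ^ 2 - 4 * γ) / α) + Real.pi)
    (x : ℕ → ℝ) (hx : ∀ j ≥ 1, x j ≠ 0)
    (hrec : ∀ j ≥ 1, x (j + 1) = α + γ / x j)
    (ω : ℝ) (hω : ω = -φ + Real.arctan (Real.cot φ - (x 1 / ρ) * (Real.sin φ)⁻¹)) :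
    ∀ j : ℕ, 1 ≤ j → Real.cos ((j : ℝ) * φ + ω) ≠ 0 ∧
      x j = ρ * (Real.cos φ - Real.sin φ * Real.tan ((j : ℝ) * φ + ω)) := by
  have hγ : γ < 0 := by nlinarith [sq_nonneg α]
  have hρpos : 0 < ρ := by rw [hρ]; exact Real.sqrt_pos.mpr (by linarith)
  have hρne : ρ ≠ 0 := ne_of_gt hρpos
  have hρsq : ρ ^ 2 = -γ := by rw [hρ]; exact Real.sq_sqrt (by linarith)
  set s := Real.sqrt (-α ^ 2 - 4 * γ) with hs
  have hspos : 0 < s := Real.sqrt_pos.mpr (by nlinarith)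
  have hssq : s ^ 2 = -α ^ 2 - 4 * γ := Real.sq_sqrt (by nlinarith)
  have hαne : α ≠ 0 := ne_of_lt hα
  have h1u : Real.sqrt (1 + (s / α) ^ 2) = 2 * ρ / (-α) := by
    have h : 1 + (s / α) ^ 2 = (2 * ρ / (-α)) ^ 2 := by
      field_simp
      nlinarith [hssq, hρsq]
    rw [h, Real.sqrt_sq (div_nonneg (by positivity) (by linarith))]
  have hcos : Real.cos φ = α / (2 * ρ) := by
    rw [hφ, Real.cos_add_pi, Real.cos_arctan, h1u]
    field_simp
  have hsin : Real.sin φ = s / (2 * ρ) := by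
    rw [hφ, Real.sin_add_pi, Real.sin_arctan, h1u]
    field_simp
  have hsinpos : 0 < Real.sin φ := by rw [hsin]; positivity
  have hsinne : Real.sin φ ≠ 0 := ne_of_gt hsinpos
  -- the key invariant
  have key : ∀ j : ℕ, 1 ≤ j → Real.cos ((j : ℝ) * φ + ω) ≠ 0 ∧
      x j * Real.cos ((j : ℝ) * φ + ω) = ρ * Real.cos (((j : ℝ) + 1) * φ + ω) := by
    intro j hj
    induction j with
    | zero => omega
    | succ n ih =>
      rcases Nat.eq_or_lt_of_le hj with h1 | hlt
      · -- base case n+1 = 1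
        have hn : n = 0 := by omega
        subst hn
        set T := Real.cot φ - (x 1 / ρ) * (Real.sin φ)⁻¹ with hT
        have hψ : (1 : ℝ) * φ + ω = Real.arctan T := by rw [hω]; ring
        have hcψ : Real.cos ((1 : ℝ) * φ + ω) ≠ 0 := by
          rw [hψ]; exact ne_of_gt (Real.cos_arctan_pos T)
        have ec : ((0 + 1 : ℕ) : ℝ) = 1 := by norm_num
        rw [ec]
        refine ⟨hcψ, ?_⟩
        have hsψ : Real.sin ((1 : ℝ) * φ + ω) = T * Real.cos ((1 : ℝ) * φ + ω) := by
          rw [hψ, Real.sin_arctan, Real.cos_arctan]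
          ring
        have expand : Real.cos (((1 : ℝ) + 1) * φ + ω) =
            Real.cos ((1 : ℝ) * φ + ω) * Real.cos φ -
              Real.sin ((1 : ℝ) * φ + ω) * Real.sin φ := by
          have h2 : ((1 : ℝ) + 1) * φ + ω = ((1 : ℝ) * φ + ω) + φ := by ring
          rw [h2, Real.cos_add]
        have hTval : Real.cos φ - Real.sin φ * T = x 1 / ρ := by
          rw [hT, Real.cot_eq_cos_div_sin]
          field_simp
          ring
        have hx1 : x 1 = ρ * (Real.cos φ - Real.sin φ * T) := by
          rw [hTval]; field_simp
        rw [expand, hsψ, hx1]; ring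
      · -- inductive step
        have hn : 1 ≤ n := by omega
        obtain ⟨hc, heq⟩ := ih hn
        have hxn : x n ≠ 0 := hx n hn
        have hcnext : Real.cos (((n : ℝ) + 1) * φ + ω) ≠ 0 := by
          intro h0
          rw [h0, mul_zero] at heq
          exact hc ((mul_eq_zero.mp heq).resolve_left hxn)
        constructor
        · push_cast; exact hcnext
        · have hrecn := hrec n hn
          have hαval : α = 2 * ρ * Real.cos φ := by
            rw [hcos]; field_simp
          have hγval : γ = -ρ ^ 2 := by linarith [hρsq]
          -- from heq : cos(nφ+ω) = ρ cos((n+1)φ+ω) / x n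
          have hdiv : Real.cos ((n : ℝ) * φ + ω) =
              ρ * Real.cos (((n : ℝ) + 1) * φ + ω) / x n := by
            field_simp
            rw [mul_comm φ ((n : ℝ) + 1)]
            linarith [heq]
          have hid : Real.cos (((n : ℝ) + 2) * φ + ω) =
              2 * Real.cos φ * Real.cos (((n : ℝ) + 1) * φ + ω) -
                Real.cos ((n : ℝ) * φ + ω) := by
            have e1 : ((n : ℝ) + 2) * φ + ω = (((n : ℝ) + 1) * φ + ω) + φ := by ring
            have e2 : ((n : ℝ) * φ + ω) = (((n : ℝ) + 1) * φ + ω) - φ := by ring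
            rw [e1, e2, Real.cos_add, Real.cos_sub]; ring
          have goal : x (n + 1) * Real.cos (((n : ℝ) + 1) * φ + ω) =
              ρ * Real.cos (((n : ℝ) + 2) * φ + ω) := by
            rw [hrecn, hid, hαval, hγval, hdiv]
            field_simp
            ring
          have ecast : ((n + 1 : ℕ) : ℝ) = (n : ℝ) + 1 := by push_cast; ring
          rw [ecast]
          convert goal using 3
          ring
  intro j hj
  obtain ⟨hc, heq⟩ := key j hj
  refine ⟨hc, ?_⟩
  rw [Real.tan_eq_sin_div_cos]
  have hcadd : Real.cos (((j : ℝ) + 1) * φ + ω) =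
      Real.cos φ * Real.cos ((j : ℝ) * φ + ω) -
        Real.sin φ * Real.sin ((j : ℝ) * φ + ω) := by
    have e : ((j : ℝ) + 1) * φ + ω = ((j : ℝ) * φ + ω) + φ := by ring
    rw [e, Real.cos_add]; ring
  rw [hcadd] at heq
  field_simp
  linarith [heq]
end

section
/- Let x_1 = (1/2)·(1 + 1/(−5 + √2)) and define the sequence (x_j)_{j≥1} by x_{j+1} = 1 − (1/4)/x_j. Then x_j ≠ 0 for every j ≥ 1, x_4 < 0, and x_j > 0 for every j ≥ 1 with j ≠ 4. -/
/-- Example 3.3: for the recurrence x_{j+1} = 1 − (1/4)/x_j with initial condition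
x₁ = (1/2)(1 + 1/(−5 + √2)), every term is nonzero, x₄ is the only negative term,
and all other terms are positive. -/
theorem example_extended_solution (x : ℕ → ℝ)
    (hx1 : x 1 = (1 / 2) * (1 + 1 / (-5 + Real.sqrt 2)))
    (hrec : ∀ j ≥ 1, x (j + 1) = 1 - (1 / 4) / x j) :
    (∀ j ≥ 1, x j ≠ 0) ∧ x 4 < 0 ∧ (∀ j ≥ 1, j ≠ 4 → 0 < x j) := by
  have hs1 : (1:ℝ) < Real.sqrt 2 := by
    have h := Real.sq_sqrt (by norm_num : (0:ℝ) ≤ 2)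
    nlinarith [Real.sqrt_nonneg 2]
  have hs2 : Real.sqrt 2 < 2 := by
    have h := Real.sq_sqrt (by norm_num : (0:ℝ) ≤ 2)
    nlinarith [Real.sqrt_nonneg 2]
  -- sign of the denominator term √2 - 6 + j
  have hden : ∀ j : ℕ, 1 ≤ j →
      (Real.sqrt 2 - 6 + j < 0 ∧ j ≤ 4) ∨ (0 < Real.sqrt 2 - 6 + j ∧ 5 ≤ j) := by
    intro j hj
    by_cases h : j ≤ 4
    · left
      have : (j:ℝ) ≤ 4 := by exact_mod_cast h
      exact ⟨by linarith, h⟩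
    · right
      have h5 : 5 ≤ j := by omega
      have : (5:ℝ) ≤ j := by exact_mod_cast h5
      exact ⟨by linarith, h5⟩
  -- sign of the numerator term √2 - 5 + j
  have hnum : ∀ j : ℕ, 1 ≤ j →
      (Real.sqrt 2 - 5 + j < 0 ∧ j ≤ 3) ∨ (0 < Real.sqrt 2 - 5 + j ∧ 4 ≤ j) := by
    intro j hj
    by_cases h : j ≤ 3
    · left
      have : (j:ℝ) ≤ 3 := by exact_mod_cast h
      exact ⟨by linarith, h⟩
    · right
      have h4 : 4 ≤ j := by omega
      have : (4:ℝ) ≤ j := by exact_mod_cast h4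
      exact ⟨by linarith, h4⟩
  have hdne : ∀ j : ℕ, 1 ≤ j → Real.sqrt 2 - 6 + j ≠ 0 := by
    intro j hj
    rcases hden j hj with ⟨h, _⟩ | ⟨h, _⟩
    · exact ne_of_lt h
    · exact ne_of_gt h
  have hnne : ∀ j : ℕ, 1 ≤ j → Real.sqrt 2 - 5 + j ≠ 0 := by
    intro j hj
    rcases hnum j hj with ⟨h, _⟩ | ⟨h, _⟩
    · exact ne_of_lt h
    · exact ne_of_gt h
  -- closed form
  have hf : ∀ j : ℕ, 1 ≤ j →
      x j = (Real.sqrt 2 - 5 + j) / (2 * (Real.sqrt 2 - 6 + j)) := by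
    intro j hj
    induction j with
    | zero => omega
    | succ n ih =>
      rcases Nat.lt_or_ge n 1 with h | h
      · have hn0 : n = 0 := by omega
        subst hn0
        rw [hx1]
        have h1 : (-5:ℝ) + Real.sqrt 2 ≠ 0 := by
          have := hnne 1 le_rfl
          push_cast at this ⊢
          intro hc; apply this; linarith
        have h2 : Real.sqrt 2 - 6 + (1:ℕ) ≠ 0 := hdne 1 le_rfl
        push_cast at h2 ⊢
        field_simp
        ring
      · have hxn := ih h
        have hdn := hdne n h
        have hnn := hnne n h
        rw [hrec n h, hxn]
        push_cast at hdn hnn ⊢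
        have hdn2 : Real.sqrt 2 - 6 + ((n:ℝ) + 1) ≠ 0 := by
          intro hc; apply hnn; linarith
        field_simp
        ring
  refine ⟨?_, ?_, ?_⟩
  · intro j hj
    rw [hf j hj]
    exact div_ne_zero (hnne j hj) (mul_ne_zero two_ne_zero (hdne j hj))
  · have h4 : x 4 = (Real.sqrt 2 - 5 + (4:ℕ)) / (2 * (Real.sqrt 2 - 6 + (4:ℕ))) :=
      hf 4 (by norm_num)
    rw [h4]
    push_cast
    apply div_neg_of_pos_of_neg
    · linarith
    · linarith
  · intro j hj hj4
    rw [hf j hj]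
    rcases hnum j hj with ⟨hn, hle⟩ | ⟨hn, hge⟩
    · rcases hden j hj with ⟨hd, _⟩ | ⟨_, hd5⟩
      · exact div_pos_of_neg_of_neg hn (by linarith)
      · omega
    · rcases hden j hj with ⟨hd, hd4⟩ | ⟨hd, _⟩
      · omega
      · exact div_pos hn (by linarith)
end

section
/- Let n ≥ 3 be a natural number and set φ := arctan(√(n² − 1)). Let (x_j)_{j≥1} be a real sequence with x_j ≠ 0 for all j ≥ 1 satisfying x_1 = −1 + 2/n and x_{j+1} = 2/n − 1/x_j for all j ≥ 1. Then for every j ≥ 1, cos((j − 1/2)·φ) ≠ 0 and x_j = 1/n − (√(n² − 1)/n)·tan((j − 1/2)·φ). -/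
/-- Example 3.5: the recurrence x₁ = −1 + 2/n, x_{j+1} = 2/n − 1/x_j (n ≥ 3) has
explicit solution x_j = 1/n − (√(n² − 1)/n)·tan((j − 1/2)·φ) with
φ = arctan(√(n² − 1)). -/
theorem laplacian_average_recurrence_solution (n : ℕ) (hn : 3 ≤ n)
    (φ : ℝ) (hφ : φ = Real.arctan (Real.sqrt ((n : ℝ) ^ 2 - 1)))
    (x : ℕ → ℝ) (hx : ∀ j ≥ 1, x j ≠ 0)
    (hx1 : x 1 = -1 + 2 / (n : ℝ))
    (hrec : ∀ j ≥ 1, x (j + 1) = 2 / (n : ℝ) - 1 / x j) :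
    ∀ j : ℕ, 1 ≤ j → Real.cos (((j : ℝ) - 1 / 2) * φ) ≠ 0 ∧
      x j = 1 / (n : ℝ) -
        (Real.sqrt ((n : ℝ) ^ 2 - 1) / (n : ℝ)) * Real.tan (((j : ℝ) - 1 / 2) * φ) := by
  have hn3 : (3 : ℝ) ≤ (n : ℝ) := by exact_mod_cast hn
  have hnpos : (0 : ℝ) < (n : ℝ) := by linarith
  set s : ℝ := Real.sqrt ((n : ℝ) ^ 2 - 1) with hs
  have hsnn : 0 ≤ s := Real.sqrt_nonneg _
  have hs2 : s ^ 2 = (n : ℝ) ^ 2 - 1 := Real.sq_sqrt (by nlinarith)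
  have hsq : Real.sqrt (1 + s ^ 2) = (n : ℝ) := by
    rw [hs2]
    rw [show 1 + ((n:ℝ)^2 - 1) = (n:ℝ)^2 by ring]
    exact Real.sqrt_sq hnpos.le
  have hcos : Real.cos φ = 1 / (n : ℝ) := by
    rw [hφ, Real.cos_arctan, hsq]
  have hsin : Real.sin φ = s / (n : ℝ) := by
    rw [hφ, Real.sin_arctan, hsq]
  have hφgt : -(Real.pi / 2) < φ := by rw [hφ]; exact Real.neg_pi_div_two_lt_arctan _
  have hφlt : φ < Real.pi / 2 := by rw [hφ]; exact Real.arctan_lt_pi_div_two _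
  have hnne : (n : ℝ) ≠ 0 := hnpos.ne'
  have ratio : ∀ θ : ℝ, Real.cos θ ≠ 0 →
      1 / (n : ℝ) - s / n * Real.tan θ = Real.cos (θ + φ) / Real.cos θ := by
    intro θ hθ
    rw [Real.tan_eq_sin_div_cos, Real.cos_add, hcos, hsin]
    field_simp
  intro j hj
  induction j with
  | zero => omega
  | succ k ih =>
    rcases Nat.eq_or_lt_of_le hj with h1 | h2
    · -- base case j = 1
      have hk : k = 0 := by omega
      subst hk
      have hθ : ((1 : ℕ) : ℝ) - 1 / 2 = 1 / 2 := by norm_num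
      have hc : 0 < Real.cos ((1 / 2 : ℝ) * φ) := by
        apply Real.cos_pos_of_mem_Ioo
        constructor <;> [linarith [Real.pi_pos]; linarith]
      simp only [Nat.cast_one, hθ]
      refine ⟨hc.ne', ?_⟩
      have hφ2 : φ = 2 * ((1 / 2 : ℝ) * φ) := by ring
      set y := (1 / 2 : ℝ) * φ with hy
      have hc2 : Real.cos φ = 2 * Real.cos y ^ 2 - 1 := by
        rw [hφ2, Real.cos_two_mul]
      have hsy : Real.sin φ = 2 * Real.sin y * Real.cos y := by
        rw [hφ2, Real.sin_two_mul]
      have hpy := Real.sin_sq_add_cos_sq y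
      rw [hx1, Real.tan_eq_sin_div_cos]
      rw [hcos] at hc2; rw [hsin] at hsy
      rw [show (2:ℝ)/n = 2*(1/n) by ring, hc2, hsy]
      field_simp
      nlinarith [hpy]
    · -- inductive step: k ≥ 1
      have hk1 : 1 ≤ k := by omega
      obtain ⟨ihc, ihx⟩ := ih hk1
      set θ := ((k : ℝ) - 1 / 2) * φ with hθ
      have hθ' : (((k + 1 : ℕ) : ℝ) - 1 / 2) * φ = θ + φ := by
        push_cast; ring
      rw [hθ']
      have hxk := hx k hk1
      have hxkr : x k = Real.cos (θ + φ) / Real.cos θ := by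
        rw [ihx]; exact ratio θ ihc
      have hcne : Real.cos (θ + φ) ≠ 0 := by
        intro h
        apply hxk
        rw [hxkr, h, zero_div]
      refine ⟨hcne, ?_⟩
      have e2 : Real.cos θ = Real.cos (θ+φ) * Real.cos φ + Real.sin (θ+φ) * Real.sin φ := by
        have h := Real.cos_sub (θ + φ) φ
        rwa [add_sub_cancel_right] at h
      have step : 2/(n:ℝ) - 1/(Real.cos (θ+φ)/Real.cos θ) =
          Real.cos ((θ+φ)+φ)/Real.cos (θ+φ) := by
        have h1' : Real.cos (θ+φ) * Real.cos φ + Real.sin (θ+φ) * Real.sin φ ≠ 0 :=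
          e2 ▸ ihc
        rw [Real.cos_add (θ+φ) φ, e2, show (2:ℝ)/n = 2 * (1/n) by ring, ← hcos]
        field_simp
        ring
      rw [hrec k hk1, hxkr, step, ratio (θ + φ) hcne]
end

section
/- Set ε := (54 + 6√33)^{1/3}/3 + 4/(54 + 6√33)^{1/3}. Then ε³ − 4ε − 4 = 0, ε is the unique real root of x³ − 4x − 4, and for a real number λ > 4 with θ(λ) := (2 − λ − √(λ² − 4λ))/2, the equation 3 − λ − 1/(1 − λ) − 2/θ(λ) = 0 holds if and only if λ = 2 + ε. -/
set_option maxHeartbeats 1000000 in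
/-- The algebraic core of Theorem 4.2: with
ε = (54 + 6√33)^(1/3)/3 + 4/(54 + 6√33)^(1/3), one has ε³ − 4ε − 4 = 0, ε is the
unique real root of x³ − 4x − 4, and for λ > 4 with
θ(λ) = (2 − λ − √(λ² − 4λ))/2, the equation 3 − λ − 1/(1 − λ) − 2/θ(λ) = 0 holds
if and only if λ = 2 + ε. -/
theorem laplacian_limit_point_equation (ε : ℝ)
    (hε : ε = (54 + 6 * Real.sqrt 33) ^ ((1 : ℝ) / 3) / 3 +
      4 / (54 + 6 * Real.sqrt 33) ^ ((1 : ℝ) / 3)) :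
    ε ^ 3 - 4 * ε - 4 = 0 ∧
    (∀ x : ℝ, x ^ 3 - 4 * x - 4 = 0 → x = ε) ∧
    (∀ l : ℝ, 4 < l →
      (3 - l - 1 / (1 - l) - 2 / ((2 - l - Real.sqrt (l ^ 2 - 4 * l)) / 2) = 0 ↔
        l = 2 + ε)) := by
  set c : ℝ := (54 + 6 * Real.sqrt 33) ^ ((1 : ℝ) / 3) with hc
  have h33 : Real.sqrt 33 ^ 2 = 33 := Real.sq_sqrt (by norm_num)
  have h33nn : (0:ℝ) ≤ Real.sqrt 33 := Real.sqrt_nonneg 33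
  have hbase : (0:ℝ) < 54 + 6 * Real.sqrt 33 := by positivity
  have hcpos : 0 < c := Real.rpow_pos_of_pos hbase _
  have hcne : c ≠ 0 := ne_of_gt hcpos
  have hc3 : c ^ 3 = 54 + 6 * Real.sqrt 33 := by
    rw [hc, ← Real.rpow_natCast (_ ^ ((1:ℝ)/3)) 3, ← Real.rpow_mul hbase.le]
    norm_num
  have key : c ^ 6 - 108 * c ^ 3 + 1728 = 0 := by
    have : c ^ 6 = (c ^ 3) ^ 2 := by ring
    rw [this, hc3]
    nlinarith [h33]
  have h1 : ε ^ 3 - 4 * ε - 4 = 0 := by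
    have expand : ε ^ 3 - 4 * ε - 4 = (c ^ 6 - 108 * c ^ 3 + 1728) / (27 * c ^ 3) := by
      rw [hε]; field_simp; ring
    rw [expand, key, zero_div]
  have hc2 : 12 < c ^ 2 := by
    nlinarith [hc3, h33nn, hcpos, sq_nonneg (c - 5), sq_nonneg (c - 4)]
  have hε2 : 16 / 3 < ε ^ 2 := by
    have h : ε ^ 2 - 16 / 3 = (c ^ 2 - 12) ^ 2 / (9 * c ^ 2) := by
      rw [hε]; field_simp; ring
    have hnum : 0 < (c ^ 2 - 12) ^ 2 := pow_pos (by linarith) 2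
    have hden : 0 < 9 * c ^ 2 := by positivity
    have := div_pos hnum hden
    linarith [h, this]
  have huniq : ∀ x : ℝ, x ^ 3 - 4 * x - 4 = 0 → x = ε := by
    intro x hx
    have hfac : (x - ε) * (x ^ 2 + x * ε + ε ^ 2 - 4) = 0 := by
      linear_combination hx - h1
    rcases mul_eq_zero.mp hfac with h | h
    · linarith [sub_eq_zero.mp h]
    · exfalso; nlinarith [sq_nonneg (x + ε / 2), hε2]
  refine ⟨h1, huniq, ?_⟩
  intro l hl
  set s : ℝ := Real.sqrt (l ^ 2 - 4 * l) with hsdef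
  have hsnn : 0 ≤ s := Real.sqrt_nonneg _
  have hs2 : s ^ 2 = l ^ 2 - 4 * l := Real.sq_sqrt (by nlinarith)
  have hθne : (2 - l - s) / 2 ≠ 0 := by
    intro h
    have : 2 - l - s = 0 := by linarith [(div_eq_zero_iff.mp h).resolve_right (by norm_num)]
    linarith
  have hdne : (2 - l - s) ≠ 0 := by linarith
  have hlm1 : (1 : ℝ) - l ≠ 0 := by linarith
  have hprod : (2 - l - s) * (2 - l + s) = 4 := by linear_combination (-1 : ℝ) * hs2
  have hdiv : 2 / ((2 - l - s) / 2) = 2 - l + s := by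
    rw [div_div_eq_mul_div, div_eq_iff hdne]
    linarith [hprod]
  have heqn : 3 - l - 1 / (1 - l) - 2 / ((2 - l - s) / 2)
      = 1 - 1 / (1 - l) - s := by rw [hdiv]; ring
  rw [heqn]
  constructor
  · intro h
    have hinv : 1 / (1 - l) = 1 - s := by linarith
    rw [div_eq_iff hlm1] at hinv
    have hsl : s * (l - 1) = l := by linear_combination (-1 : ℝ) * hinv
    have hpoly : (l - 2) ^ 3 - 4 * (l - 2) - 4 = 0 := by
      have h3 : (l ^ 2 - 4 * l) * (l - 1) ^ 2 = l ^ 2 := by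
        rw [← hs2]; linear_combination (s * (l - 1) + l) * hsl
      have hlne : l ≠ 0 := by linarith
      have : l * ((l - 2) ^ 3 - 4 * (l - 2) - 4) = 0 := by linear_combination h3
      rcases mul_eq_zero.mp this with h' | h'
      · exact absurd h' hlne
      · exact h'
    have := huniq (l - 2) hpoly
    linarith
  · intro h
    have hpoly : (l - 2) ^ 3 - 4 * (l - 2) - 4 = 0 := by
      rw [h]; linear_combination h1
    have h3 : (l ^ 2 - 4 * l) * (l - 1) ^ 2 = l ^ 2 := by linear_combination l * hpoly
    have hs_eq : s = l / (l - 1) := by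
      have hl1 : (0:ℝ) < l - 1 := by linarith
      have h4 : (s * (l - 1)) ^ 2 = l ^ 2 := by
        rw [mul_pow, hs2]; exact h3
      have h5 : s * (l - 1) = l := by
        have hfac : (s * (l - 1) - l) * (s * (l - 1) + l) = 0 := by linear_combination h4
        rcases mul_eq_zero.mp hfac with h' | h'
        · linarith
        · exfalso; linarith [mul_nonneg hsnn hl1.le]
      field_simp [ne_of_gt hl1]
      linarith [h5]
    have hl1ne : l - 1 ≠ 0 := by linarith
    rw [hs_eq]
    field_simp
    ring
end

section
/- Let n ≥ 8 be a natural number and r a natural number with 0 ≤ r ≤ ⌊n/4⌋. Set x_1 := −1 + 2/n, x_2 := 2/n − 1/x_1, and b_1(r) := x_1 + r·(1 − 1/x_2). Then b_1(r) < 0. -/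
/-- Lemma 5.1: for n ≥ 8 and 0 ≤ r ≤ ⌊n/4⌋, the initial value
b₁(r) = x₁ + r(1 − 1/x₂) is negative, where x₁ = −1 + 2/n and x₂ = 2/n − 1/x₁. -/
theorem initial_value_negative (n r : ℕ) (hn : 8 ≤ n) (hr : r ≤ n / 4)
    (x1 x2 : ℝ) (hx1 : x1 = -1 + 2 / (n : ℝ)) (hx2 : x2 = 2 / (n : ℝ) - 1 / x1) :
    x1 + (r : ℝ) * (1 - 1 / x2) < 0 := by
  have hN : (8:ℝ) ≤ (n:ℝ) := by exact_mod_cast hn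
  have hNpos : (0:ℝ) < (n:ℝ) := by linarith
  have hr' : (r : ℝ) * 4 ≤ (n : ℝ) := by
    have h : r * 4 ≤ n := (Nat.le_div_iff_mul_le (by norm_num)).mp hr
    exact_mod_cast h
  have hrpos : (0:ℝ) ≤ (r:ℝ) := Nat.cast_nonneg r
  have hx1v : x1 = -((n:ℝ) - 2) / (n:ℝ) := by
    rw [hx1]; field_simp; ring
  have hx1neg : x1 < 0 := by
    rw [hx1v]
    apply div_neg_of_neg_of_pos _ hNpos
    linarith
  have hx1ne : x1 ≠ 0 := ne_of_lt hx1neg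
  have hx2v : x2 = ((n:ℝ)^2 + 2*(n:ℝ) - 4) / ((n:ℝ)^2 - 2*(n:ℝ)) := by
    have h2 : (n:ℝ) - 2 ≠ 0 := by linarith
    have hd : (n:ℝ)^2 - 2*(n:ℝ) ≠ 0 := by nlinarith
    have h3 : (2:ℝ) - (n:ℝ) ≠ 0 := by linarith
    rw [hx2, hx1v]
    field_simp
    ring
  have hden : (0:ℝ) < (n:ℝ)^2 - 2*(n:ℝ) := by nlinarith
  have hnum : (0:ℝ) < (n:ℝ)^2 + 2*(n:ℝ) - 4 := by nlinarith
  have hx2pos : 0 < x2 := by rw [hx2v]; positivity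
  have key : 1 - 1 / x2 = (4*(n:ℝ) - 4) / ((n:ℝ)^2 + 2*(n:ℝ) - 4) := by
    have h1 : ((n:ℝ)^2 + 2*(n:ℝ) - 4) ≠ 0 := ne_of_gt hnum
    have h2 : ((n:ℝ)^2 - 2*(n:ℝ)) ≠ 0 := ne_of_gt hden
    rw [hx2v]
    field_simp
    rw [sub_div' (by nlinarith)]
    ring
  rw [key, hx1v, ← mul_div_assoc]
  rw [div_add_div _ _ (ne_of_gt hNpos) (ne_of_gt hnum)]
  apply div_neg_of_neg_of_pos _ (by positivity)
  nlinarith [mul_nonneg hrpos (le_of_lt hNpos), sq_nonneg ((n:ℝ) - 8)]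
end

section
/- Let n ≥ 8 be a natural number and r a natural number with 1 ≤ r ≤ ⌊n/4⌋. Set x_1 := −1 + 2/n, x_2 := 2/n − 1/x_1, b_1 := x_1 + r·(1 − 1/x_2), and let (b_j)_{j≥1} satisfy b_{j+1} = 2/n − 1/b_j with b_j ≠ 0 for all j ≥ 1. Set φ := arctan(√(n² − 1)), P := π/φ, ω_r := arctan((1 − n·b_1)/√(n² − 1)) − φ, and k₀ := ⌊1/(P − 2) + (ω_r − arctan(1/√(n² − 1)))/(φ·(P − 2))⌋. Then k₀ is a nonnegative integer, b_{2k+1} < 0 for every integer 0 ≤ k ≤ k₀, and b_{2k₀+3} > 0; that is, k₀ = max{k : b_{2k+1} < 0} and this maximum is finite. -/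
private lemma cos_add_nat_mul_pi (x : ℝ) (k : ℕ) :
    Real.cos (x + k * Real.pi) = (-1) ^ k * Real.cos x := by
  induction k with
  | zero => simp
  | succ m ih =>
      have h : x + ((m + 1 : ℕ) : ℝ) * Real.pi = (x + m * Real.pi) + Real.pi := by
        push_cast; ring
      rw [h, Real.cos_add_pi, ih]
      push_cast; ring


set_option maxHeartbeats 1000000 in
/-- Theorem 5.2: for n ≥ 8 and 1 ≤ r ≤ ⌊n/4⌋, the sequence b₁ = x₁ + r(1 − 1/x₂),
b_{j+1} = 2/n − 1/b_j keeps the alternating sign pattern exactly up to the index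
k₀ = ⌊1/(P−2) + (ω_r − arctan(cot φ))/(φ(P−2))⌋ : one has b_{2k+1} < 0 for all
0 ≤ k ≤ k₀ and b_{2k₀+3} > 0, i.e. k₀ = max{k : b_{2k+1} < 0} < ∞. -/
theorem alternating_sign_pattern (n r : ℕ) (hn : 8 ≤ n) (hr1 : 1 ≤ r)
    (hr2 : r ≤ n / 4)
    (x1 x2 b1 : ℝ) (hx1 : x1 = -1 + 2 / (n : ℝ)) (hx2 : x2 = 2 / (n : ℝ) - 1 / x1)
    (hb1 : b1 = x1 + (r : ℝ) * (1 - 1 / x2))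
    (b : ℕ → ℝ) (hb : b 1 = b1) (hbne : ∀ j ≥ 1, b j ≠ 0)
    (hrec : ∀ j ≥ 1, b (j + 1) = 2 / (n : ℝ) - 1 / b j)
    (φ P ω : ℝ) (hφ : φ = Real.arctan (Real.sqrt ((n : ℝ) ^ 2 - 1)))
    (hP : P = Real.pi / φ)
    (hω : ω = Real.arctan ((1 - (n : ℝ) * b1) / Real.sqrt ((n : ℝ) ^ 2 - 1)) - φ)
    (k₀ : ℤ)
    (hk₀ : k₀ = ⌊1 / (P - 2) +
      (ω - Real.arctan (1 / Real.sqrt ((n : ℝ) ^ 2 - 1))) / (φ * (P - 2))⌋) :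
    0 ≤ k₀ ∧ (∀ k : ℕ, (k : ℤ) ≤ k₀ → b (2 * k + 1) < 0) ∧
      0 < b (2 * k₀.toNat + 3) := by
  have hN : (8:ℝ) ≤ (n:ℝ) := by exact_mod_cast hn
  set N : ℝ := (n:ℝ) with hNdef
  clear_value N
  have hN0 : (0:ℝ) < N := by linarith
  have hr4 : (r:ℝ) * 4 ≤ N := by
    have h : r * 4 ≤ n := (Nat.le_div_iff_mul_le (by norm_num)).1 hr2
    have h2 : ((r*4 : ℕ):ℝ) ≤ ((n:ℕ):ℝ) := Nat.cast_le.2 h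
    push_cast at h2
    simp only [hNdef]
    linarith
  have hs2 : Real.sqrt (N^2 - 1) ^ 2 = N^2 - 1 := Real.sq_sqrt (by nlinarith)
  set s : ℝ := Real.sqrt (N^2-1) with hsdef
  clear_value s
  have hs0 : 0 < s := by
    rw [hsdef]; exact Real.sqrt_pos.2 (by nlinarith)
  -- trig of φ
  have hφpos : 0 < φ := by
    rw [hφ]
    have := Real.arctan_strictMono hs0
    rwa [Real.arctan_zero] at this
  have hφlt : φ < Real.pi/2 := by rw [hφ]; exact Real.arctan_lt_pi_div_two s
  have hpi : 0 < Real.pi := Real.pi_pos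
  have h1s : (1:ℝ) + s^2 = N^2 := by rw [hs2]; ring
  have hcosφ : Real.cos φ = 1/N := by
    rw [hφ, Real.cos_arctan, h1s, Real.sqrt_sq hN0.le]
  have hsinφ : Real.sin φ = s/N := by
    rw [hφ, Real.sin_arctan, h1s, Real.sqrt_sq hN0.le]
  -- b1 < 0
  have hx1neg : x1 < 0 := by
    rw [hx1]
    have : 2/N < 1 := by rw [div_lt_one hN0]; linarith
    linarith
  have hx1ne : x1 ≠ 0 := ne_of_lt hx1neg
  have hD2 : (0:ℝ) < N^2 + 2*N - 4 := by nlinarith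
  have hNN2 : (0:ℝ) < N*(N-2) := by nlinarith
  have hx1ne' : (-1 + 2/N) ≠ 0 := by rw [← hx1]; exact hx1ne
  have h2Nne : (2 - N) ≠ 0 := by linarith
  have hx2e : x2 * (N*(N-2)) = N^2+2*N-4 := by
    rw [hx2, hx1]
    have e : -1 + 2/N = (2-N)/N := by field_simp; ring
    rw [e, one_div_div]
    field_simp
    ring
  have hx2v : x2 = (N^2+2*N-4)/(N*(N-2)) := by
    rw [eq_div_iff (ne_of_gt hNN2)]; exact hx2e
  have hx2pos : 0 < x2 := by
    rw [hx2v]; exact div_pos hD2 hNN2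
  have hx2ne : x2 ≠ 0 := ne_of_gt hx2pos
  have hb1v : b1 * (N * (N^2+2*N-4)) = (2-N)*(N^2+2*N-4) + (r:ℝ)*(4*N-4)*N := by
    rw [hb1, hx2v, hx1]
    field_simp [h2Nne, (show N*(N+2)-4 ≠ 0 from ne_of_gt (by nlinarith))]
    ring
  have hrr : 0 ≤ (N - 4*(r:ℝ)) * ((4*N-4)*N) :=
    mul_nonneg (by linarith) (mul_nonneg (by linarith) hN0.le)
  have hRHS : (2-N)*(N^2+2*N-4) + (r:ℝ)*(4*N-4)*N < 0 := by
    nlinarith [hrr, mul_nonneg (sub_nonneg.2 hN) hN0.le]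
  have hM : 0 < N*(N^2+2*N-4) := mul_pos hN0 hD2
  have hb1neg : b1 < 0 := by
    have hprod : b1 * (N*(N^2+2*N-4)) < 0 := by rw [hb1v]; exact hRHS
    by_contra hcon
    push_neg at hcon
    exact absurd hprod (not_lt.2 (mul_nonneg hcon hM.le))
  -- θ1 = φ + ω
  set c : ℝ := (1 - N*b1)/s with hcdef
  clear_value c
  have hc0 : 0 < c := by
    rw [hcdef]; exact div_pos (by linarith [mul_pos hN0 (neg_pos.2 hb1neg)]) hs0
  have hθ1 : φ + ω = Real.arctan c := by rw [hω]; ring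
  have hθ1pos : 0 < φ + ω := by
    rw [hθ1]
    have := Real.arctan_strictMono hc0
    rwa [Real.arctan_zero] at this
  have hθ1lt : φ + ω < Real.pi/2 := by rw [hθ1]; exact Real.arctan_lt_pi_div_two c
  have hcosθ1 : 0 < Real.cos (φ + ω) := by
    exact Real.cos_pos_of_mem_Ioo (Set.mem_Ioo.2 ⟨by linarith, by linarith⟩)
  have hsinθ1 : Real.sin (φ + ω) = c * Real.cos (φ + ω) := by
    have ht : Real.tan (φ + ω) = c := by rw [hθ1, Real.tan_arctan]
    rw [Real.tan_eq_sin_div_cos, div_eq_iff (ne_of_gt hcosθ1)] at ht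
    linarith [ht]
  -- the key induction
  have key : ∀ j : ℕ, 1 ≤ j → Real.cos ((j:ℝ)*φ + ω) ≠ 0 ∧
      b j * Real.cos ((j:ℝ)*φ + ω) = Real.cos (((j:ℝ)+1)*φ + ω) := by
    intro j hj
    induction j, hj using Nat.le_induction with
    | base =>
        have e1 : ((1:ℕ):ℝ)*φ + ω = φ + ω := by push_cast; ring
        constructor
        · rw [e1]; exact ne_of_gt hcosθ1
        · rw [e1]
          have e2 : (((1:ℕ):ℝ)+1)*φ + ω = (φ + ω) + φ := by push_cast; ring
          rw [e2, Real.cos_add (φ + ω) φ, hb, hsinθ1, hcosφ, hsinφ, hcdef]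
          field_simp
          ring
    | succ m hm ih =>
        obtain ⟨hne, heq⟩ := ih
        have hbm := hbne m hm
        have hne' : Real.cos (((m:ℝ)+1)*φ + ω) ≠ 0 := by
          rw [← heq]; exact mul_ne_zero hbm hne
        have ecast : ((m+1:ℕ):ℝ) = (m:ℝ)+1 := by push_cast; ring
        constructor
        · rw [ecast]; exact hne'
        · rw [ecast, hrec m hm]
          have e1 : ((m:ℝ)+1+1)*φ + ω = (((m:ℝ)+1)*φ + ω) + φ := by ring
          have e2 : (((m:ℝ)+1)*φ + ω) - φ = (m:ℝ)*φ + ω := by ring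
          have trig : Real.cos ((((m:ℝ)+1)*φ + ω) + φ)
              = 2 * Real.cos φ * Real.cos (((m:ℝ)+1)*φ + ω)
                - Real.cos ((((m:ℝ)+1)*φ + ω) - φ) := by
            rw [Real.cos_add, Real.cos_sub]; ring
          rw [e1, trig, e2, ← heq, hcosφ]
          field_simp
  -- δ
  set δ : ℝ := Real.pi - 2*φ with hδdef
  clear_value δ
  have hδ0 : 0 < δ := by rw [hδdef]; linarith
  -- rewrite k₀
  have harc : Real.arctan (1/s) = Real.pi/2 - φ := by
    rw [one_div, Real.arctan_inv_of_pos hs0, hφ]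
  have hδne : (Real.pi - 2*φ) ≠ 0 := by
    have : (0:ℝ) < Real.pi - 2*φ := by linarith
    exact this.ne'
  have hAB : 1/(P-2) + (ω - Real.arctan (1/s))/(φ*(P-2))
      = (2*φ + ω - Real.pi/2)/δ := by
    have hP2 : P - 2 = (Real.pi - 2*φ)/φ := by
      rw [hP]; field_simp
    rw [harc, hP2, hδdef]
    field_simp
    ring
  have hk₀' : k₀ = ⌊(2*φ + ω - Real.pi/2)/δ⌋ := by rw [hk₀, ← hAB]
  -- θ2 > π/2
  have hcosθ2 : Real.cos (2*φ + ω) = b1 * Real.cos (φ + ω) := by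
    have h := (key 1 le_rfl).2
    have e1 : ((1:ℕ):ℝ)*φ + ω = φ + ω := by push_cast; ring
    have e2 : (((1:ℕ):ℝ)+1)*φ + ω = 2*φ + ω := by push_cast; ring
    rw [e1, e2, hb] at h
    linarith [h]
  have hcosθ2neg : Real.cos (2*φ + ω) < 0 := by
    rw [hcosθ2]; exact mul_neg_of_neg_of_pos hb1neg hcosθ1
  have hθ2gt : Real.pi/2 < 2*φ + ω := by
    by_contra hcon
    push_neg at hcon
    have : 0 ≤ Real.cos (2*φ + ω) := by
      exact Real.cos_nonneg_of_mem_Icc (Set.mem_Icc.2 ⟨by linarith, by linarith⟩)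
    linarith
  have hθ2lt : 2*φ + ω < Real.pi := by linarith
  -- k₀ ≥ 0
  have hk₀nonneg : 0 ≤ k₀ := by
    rw [hk₀']
    exact Int.floor_nonneg.2 (div_nonneg (by linarith) hδ0.le)
  -- floor bounds
  have hfl' : (k₀:ℝ)*δ ≤ 2*φ + ω - Real.pi/2 := by
    have h := Int.floor_le ((2*φ + ω - Real.pi/2)/δ)
    rw [← hk₀'] at h
    exact (le_div_iff₀ hδ0).1 h
  have hfu' : 2*φ + ω - Real.pi/2 < ((k₀:ℝ)+1)*δ := by
    have h := Int.lt_floor_add_one ((2*φ + ω - Real.pi/2)/δ)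
    rw [← hk₀'] at h
    have := (div_lt_iff₀ hδ0).1 h
    push_cast at this ⊢
    linarith
  -- shift formulas
  have hshift1 : ∀ k : ℕ, Real.cos (((2*k+1:ℕ):ℝ)*φ + ω)
      = (-1)^k * Real.cos ((φ + ω) - k*δ) := by
    intro k
    have e : ((2*k+1:ℕ):ℝ)*φ + ω = ((φ + ω) - k*δ) + k*Real.pi := by
      rw [hδdef]; push_cast; ring
    rw [e, cos_add_nat_mul_pi]
  have hshift2 : ∀ k : ℕ, Real.cos (((2*k+2:ℕ):ℝ)*φ + ω)
      = (-1)^k * Real.cos ((2*φ + ω) - k*δ) := by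
    intro k
    have e : ((2*k+2:ℕ):ℝ)*φ + ω = ((2*φ + ω) - k*δ) + k*Real.pi := by
      rw [hδdef]; push_cast; ring
    rw [e, cos_add_nat_mul_pi]
  -- the generic sign step: for k with right bounds, b(2k+1)*cos(θ1-kδ) = cos(θ2-kδ)
  have hmain : ∀ k : ℕ, b (2*k+1) * Real.cos ((φ + ω) - k*δ)
      = Real.cos ((2*φ + ω) - k*δ) ∧ Real.cos ((2*φ + ω) - k*δ) ≠ 0 := by
    intro k
    have h1 := (key (2*k+1) (by omega)).2
    have h2 := (key (2*k+2) (by omega)).1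
    have ecast : (((2*k+1:ℕ)):ℝ)+1 = ((2*k+2:ℕ):ℝ) := by push_cast; ring
    rw [hshift1 k] at h1
    rw [ecast, hshift2 k] at h1
    rw [hshift2 k] at h2
    have hne2 : Real.cos ((2*φ + ω) - k*δ) ≠ 0 := by
      intro h0; exact h2 (by rw [h0, mul_zero])
    rcases Nat.even_or_odd k with hk | hk
    · rw [hk.neg_one_pow] at h1
      exact ⟨by linear_combination h1, hne2⟩
    · rw [hk.neg_one_pow] at h1
      exact ⟨by linear_combination -h1, hne2⟩
  refine ⟨hk₀nonneg, ?_, ?_⟩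
  · -- negative part
    intro k hk
    have hkR : (k:ℝ) ≤ (k₀:ℝ) := by exact_mod_cast hk
    have hkδ : (k:ℝ)*δ ≤ 2*φ + ω - Real.pi/2 :=
      le_trans (mul_le_mul_of_nonneg_right hkR hδ0.le) hfl'
    have hkδ0 : 0 ≤ (k:ℝ)*δ := by positivity
    obtain ⟨heq, hne⟩ := hmain k
    have hApos : 0 < Real.cos ((φ + ω) - k*δ) :=
      Real.cos_pos_of_mem_Ioo (Set.mem_Ioo.2
        ⟨by linarith only [hkδ, hφlt, hpi], by linarith only [hθ1lt, hkδ0]⟩)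
    have hBle : Real.cos ((2*φ + ω) - k*δ) ≤ 0 :=
      Real.cos_nonpos_of_pi_div_two_le_of_le (by linarith only [hkδ])
        (by linarith only [hθ2lt, hkδ0, hpi])
    have hBneg : Real.cos ((2*φ + ω) - k*δ) < 0 := lt_of_le_of_ne hBle hne
    by_contra hcon
    push_neg at hcon
    have h1 : 0 * Real.cos ((φ + ω) - k*δ) ≤ b (2*k+1) * Real.cos ((φ + ω) - k*δ) :=
      mul_le_mul_of_nonneg_right hcon hApos.le
    rw [zero_mul, heq] at h1
    exact absurd h1 (not_le.2 hBneg)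
  · -- positive part
    set k : ℕ := k₀.toNat + 1 with hkdef
    clear_value k
    have hkcast : (k:ℝ) = (k₀:ℝ) + 1 := by
      have := Int.toNat_of_nonneg hk₀nonneg
      push_cast [hkdef]
      rw [show ((k₀.toNat:ℕ):ℝ) = ((k₀.toNat:ℤ):ℝ) by push_cast; ring, this]
    have hidx : 2 * k₀.toNat + 3 = 2*k + 1 := by omega
    rw [hidx]
    obtain ⟨heq, hne⟩ := hmain k
    have hup : 2*φ + ω - Real.pi/2 < (k:ℝ)*δ := by rw [hkcast]; exact hfu'
    have hlo : (k:ℝ)*δ ≤ (2*φ + ω - Real.pi/2) + δ := by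
      rw [hkcast, add_mul, one_mul]; linarith [hfl']
    have hk0' : 0 ≤ (k:ℝ)*δ := by positivity
    have hApos : 0 < Real.cos ((φ + ω) - k*δ) :=
      Real.cos_pos_of_mem_Ioo (Set.mem_Ioo.2
        ⟨by linarith [hlo, hδdef, hφpos], by linarith [hk0', hθ1lt]⟩)
    have hBpos : 0 < Real.cos ((2*φ + ω) - k*δ) :=
      Real.cos_pos_of_mem_Ioo (Set.mem_Ioo.2
        ⟨by linarith [hlo, hδdef, hφpos], by linarith [hup]⟩)
    by_contra hcon
    push_neg at hcon
    have h1 : b (2*k+1) * Real.cos ((φ + ω) - k*δ) ≤ 0 * Real.cos ((φ + ω) - k*δ) :=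
      mul_le_mul_of_nonneg_right hcon hApos.le
    rw [zero_mul, heq] at h1
    exact absurd h1 (not_le.2 hBpos)
end
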